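/- arXiv:2407.19431 — 2 statements merged into one kernel-verified Lean document; each statement's English description precedes it below -/
import Mathlib

section
/- Let G = (V, E, ends) be a multigraph, let r ≥ 0 be an integer, and let e₀ ∈ E be a non-loop edge with endpoints p ≠ q. Let G − e₀ be the multigraph with vertex type V, edge type {e ∈ E : e ≠ e₀}, and the restriction of ends. Let G/e₀ be the multigraph with vertex type V' = {v ∈ V : v ≠ q}, edge type E, and endpoint map Sym2.map φ ∘ ends, where φ : V → V' sends q to p and fixes all other vertices (so e₀ and all edges parallel to it become loops at p; no edge is deleted). For a multigraph H with vertex type W and for k ∈ ℕ, set N_H(k) := #{a : W → ℕ : ∑_{w∈W} a_w = k and ∑_{w∈S} a_w < κ_S^H + r for every nonempty subset S ⊆ W}, where κ^H is the degree function of H. Then N_G(0) = N_{G/e₀}(0), and N_G(k+1) = N_{G/e₀}(k+1) + N_{G−e₀}(k) for every k ∈ ℕ (the loopy deletion–contraction relation; N_H(k) is the dimension of the degree-k component of the r-bizonotopal algebra of H). -/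
/-!
Contracting `p` and `q` pushes a vector `a : V → ℕ` forward by adding `a q` to `a p`; as `κ` of
the contraction at `T` is `κ` of the preimage of `T`, admissible vectors push forward to
admissible ones. The admissible vectors over a fixed admissible `b` differ only by moving units
between `p` and `q`, and exactly one of them admits no further move from `p` to `q`. It exists
because `κ` is submodular, strictly so across the edge `pq`: no set containing `p` but not `q` can
be overfull while a set containing `q` but not `p` is tight. Hence `N_G(k)` is `N_{G/e₀}(k)` plus
the number of shiftable vectors, and removing a unit at `p` matches the shiftable vectors of
degree `k + 1` with the admissible vectors of `G − e₀` of degree `k`, since deleting `pq` lowers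
by one exactly the degrees of the sets meeting `{p, q}`.
-/

open Finset

/-- The degree `κ_S` of a subset `S` of vertices of a multigraph `(W, F, ends)`. -/
def multigraphKappa {W F : Type*} [Fintype F] [DecidableEq W]
    (ends : F → Sym2 W) (S : Finset W) : ℕ :=
  (Finset.univ.filter fun e => ∃ v ∈ S, v ∈ ends e).card

/-- `N_H(k)`: the number of vectors `a : W → ℕ` of total weight `k` with
`∑_{w∈S} a w < κ_S + r` for every nonempty `S ⊆ W`; this is the dimension of the
degree-`k` component of the `r`-bizonotopal algebra of the multigraph `H`. -/
noncomputable def Ncount {W F : Type*} [Fintype W] [Fintype F] [DecidableEq W]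
    (ends : F → Sym2 W) (r k : ℕ) : ℕ :=
  Set.ncard {a : W → ℕ | ∑ w : W, a w = k ∧
    ∀ S : Finset W, S.Nonempty → ∑ w ∈ S, a w < multigraphKappa ends S + r}


section Kappa

variable {V E : Type*} [Fintype E] [DecidableEq V]

def incidentEdges (ends : E → Sym2 V) (S : Finset V) : Finset E :=
  univ.filter fun e => ∃ v ∈ S, v ∈ ends e

theorem mem_incidentEdges {ends : E → Sym2 V} {S : Finset V} {e : E} :
    e ∈ incidentEdges ends S ↔ ∃ v ∈ S, v ∈ ends e := by
  simp [incidentEdges]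

theorem incidentEdges_mono (ends : E → Sym2 V) : Monotone (incidentEdges ends) :=
  fun _ _ hST _ he =>
    let ⟨v, hv, hve⟩ := mem_incidentEdges.1 he
    mem_incidentEdges.2 ⟨v, hST hv, hve⟩

theorem multigraphKappa_lt_of_subset (ends : E → Sym2 V) {S T : Finset V} (hTS : T ⊆ S)
    {e : E} {v : V} (hv : v ∈ S) (hve : v ∈ ends e) (hT : ∀ u ∈ T, u ∉ ends e) :
    multigraphKappa ends T < multigraphKappa ends S := by
  refine card_lt_card <| (ssubset_iff_of_subset (incidentEdges_mono ends hTS)).2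
    ⟨e, mem_incidentEdges.2 ⟨v, hv, hve⟩, fun he => ?_⟩
  obtain ⟨u, hu, hue⟩ := mem_incidentEdges.1 he
  exact hT u hu hue

theorem multigraphKappa_union_add_inter_lt (ends : E → Sym2 V) {e : E} {u w : V}
    (he : ends e = s(u, w)) {S T : Finset V} (huS : u ∈ S) (huT : u ∉ T) (hwT : w ∈ T)
    (hwS : w ∉ S) :
    multigraphKappa ends (S ∪ T) + multigraphKappa ends (S ∩ T) <
      multigraphKappa ends S + multigraphKappa ends T := by
  classical
  have hunion : incidentEdges ends (S ∪ T) = incidentEdges ends S ∪ incidentEdges ends T := by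
    ext
    simp only [mem_union, mem_incidentEdges, or_and_right, exists_or]
  have hlt : incidentEdges ends (S ∩ T) ⊂ incidentEdges ends S ∩ incidentEdges ends T := by
    refine (ssubset_iff_of_subset (subset_inter (incidentEdges_mono ends inter_subset_left)
      (incidentEdges_mono ends inter_subset_right))).2 ⟨e, ?_, fun h => ?_⟩
    · exact mem_inter.2 ⟨mem_incidentEdges.2 ⟨u, huS, by simp [he]⟩,
        mem_incidentEdges.2 ⟨w, hwT, by simp [he]⟩⟩
    · obtain ⟨x, hx, hxe⟩ := mem_incidentEdges.1 h
      rw [he, Sym2.mem_iff] at hxe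
      rcases hxe with rfl | rfl
      exacts [huT (mem_inter.1 hx).2, hwS (mem_inter.1 hx).1]
  have := card_lt_card hlt
  have := card_union_add_card_inter (incidentEdges ends S) (incidentEdges ends T)
  change (incidentEdges ends (S ∪ T)).card + (incidentEdges ends (S ∩ T)).card <
    (incidentEdges ends S).card + (incidentEdges ends T).card
  rw [hunion]
  omega

theorem multigraphKappa_eq_subtype_ne_add [DecidableEq E] (ends : E → Sym2 V) (e₀ : E)
    (S : Finset V) :
    multigraphKappa ends S = multigraphKappa (fun e : {e // e ≠ e₀} => ends e) S +
      if ∃ v ∈ S, v ∈ ends e₀ then 1 else 0 := by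
  simp only [multigraphKappa, card_filter]
  rw [Fintype.sum_eq_add_sum_subtype_ne _ e₀, add_comm]

theorem multigraphKappa_map [Fintype V] {W : Type*} [DecidableEq W] (ends : E → Sym2 V)
    (ψ : V → W) (T : Finset W) :
    multigraphKappa (fun e => Sym2.map ψ (ends e)) T =
      multigraphKappa ends (univ.filter fun v => ψ v ∈ T) := by
  simp only [multigraphKappa, Sym2.mem_map, mem_filter, mem_univ, true_and]
  congr 1
  ext e
  simp only [mem_filter, mem_univ, true_and]
  constructor
  · rintro ⟨_, hw, v, hv, rfl⟩
    exact ⟨v, hw, hv⟩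
  · rintro ⟨v, hv, hve⟩
    exact ⟨_, hv, v, hve, rfl⟩

end Kappa

section PiSingle

variable {V : Type*} [DecidableEq V]

theorem sum_add_pi_single (a : V → ℕ) (p : V) (n : ℕ) (S : Finset V) :
    ∑ v ∈ S, (a + Pi.single p n : V → ℕ) v =
      ∑ v ∈ S, a v + if p ∈ S then n else 0 := by
  rw [← sum_pi_single' p n S, ← sum_add_distrib]
  rfl

theorem exists_add_pi_single_eq {a : V → ℕ} {p : V} (hp : 1 ≤ a p) :
    ∃ c : V → ℕ, c + Pi.single p 1 = a :=
  ⟨Function.update a p (a p - 1), by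
    ext v
    rcases eq_or_ne v p with rfl | hv
    · simp only [Pi.add_apply, Function.update_self, Pi.single_eq_same]
      omega
    · simp [hv]⟩

end PiSingle

section Admissible

variable {V E : Type*} [Fintype V] [Fintype E]

def admissibleSet [DecidableEq V] (ends : E → Sym2 V) (r k : ℕ) : Set (V → ℕ) :=
  {a | ∑ w : V, a w = k ∧
    ∀ S : Finset V, S.Nonempty → ∑ w ∈ S, a w < multigraphKappa ends S + r}

theorem Ncount_eq_ncard_admissibleSet [DecidableEq V] (ends : E → Sym2 V) (r k : ℕ) :
    Ncount ends r k = (admissibleSet ends r k).ncard :=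
  rfl

theorem admissibleSet_finite [DecidableEq V] (ends : E → Sym2 V) (r k : ℕ) :
    (admissibleSet ends r k).Finite :=
  (Set.finite_Iic fun _ => k).subset fun _ ha v =>
    ha.1 ▸ single_le_sum (fun _ _ => Nat.zero_le _) (mem_univ v)

def pushforward {W : Type*} [DecidableEq W] (ψ : V → W) (a : V → ℕ) (w : W) : ℕ :=
  ∑ v with ψ v = w, a v

theorem sum_pushforward {W : Type*} [DecidableEq W] (ψ : V → W) (a : V → ℕ) (T : Finset W) :
    ∑ w ∈ T, pushforward ψ a w = ∑ v with ψ v ∈ T, a v := by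
  rw [← sum_fiberwise_of_maps_to (g := ψ) fun v hv => (mem_filter.1 hv).2]
  refine sum_congr rfl fun w hw => ?_
  rw [pushforward, filter_filter]
  congr 1
  ext v
  simp only [mem_filter, mem_univ, true_and]
  exact ⟨fun h => ⟨h ▸ hw, h⟩, And.right⟩

theorem pushforward_mem_admissibleSet_iff [DecidableEq V] {W : Type*} [Fintype W] [DecidableEq W]
    (ends : E → Sym2 V) (ψ : V → W) (r k : ℕ) (a : V → ℕ) :
    pushforward ψ a ∈ admissibleSet (fun e => Sym2.map ψ (ends e)) r k ↔
      ∑ v, a v = k ∧ ∀ T : Finset W, T.Nonempty →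
        ∑ v with ψ v ∈ T, a v <
          multigraphKappa ends (univ.filter fun v => ψ v ∈ T) + r := by
  simp only [admissibleSet, Set.mem_ofPred_eq, sum_pushforward, multigraphKappa_map,
    mem_univ, filter_true]

theorem pushforward_mem_admissibleSet [DecidableEq V] {W : Type*} [Fintype W] [DecidableEq W]
    {ends : E → Sym2 V} {ψ : V → W} (hψ : Function.Surjective ψ) {r k : ℕ} {a : V → ℕ}
    (ha : a ∈ admissibleSet ends r k) :
    pushforward ψ a ∈ admissibleSet (fun e => Sym2.map ψ (ends e)) r k := by
  refine (pushforward_mem_admissibleSet_iff ends ψ r k a).2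
    ⟨ha.1, fun T ⟨w, hw⟩ => ha.2 _ ?_⟩
  obtain ⟨v, rfl⟩ := hψ w
  exact ⟨v, mem_filter.2 ⟨mem_univ v, hw⟩⟩

end Admissible

section Nonseparating

variable {V E : Type*} [Fintype E] [DecidableEq V] {p q : V}

/-- The constraints of `admissibleSet` on the sets not separating `p` from `q`: these are the
constraints of the contraction of `p` and `q`, read on `V`. -/
def NonseparatingBounded (ends : E → Sym2 V) (r : ℕ) (p q : V) (a : V → ℕ) : Prop :=
  ∀ S : Finset V, S.Nonempty → (p ∈ S ↔ q ∈ S) →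
    ∑ v ∈ S, a v < multigraphKappa ends S + r

namespace NonseparatingBounded

variable {ends : E → Sym2 V} {r : ℕ} {a : V → ℕ}

theorem symm (h : NonseparatingBounded ends r p q a) : NonseparatingBounded ends r q p a :=
  fun S hS hqp => h S hS hqp.symm

theorem sum_le (h : NonseparatingBounded ends r p q a) {S : Finset V} (hS : p ∈ S ↔ q ∈ S) :
    ∑ v ∈ S, a v ≤ multigraphKappa ends S + r := by
  rcases S.eq_empty_or_nonempty with rfl | hne
  · simp
  · exact (h S hne hS).le

theorem sum_lt_of_apply_eq_zero (h : NonseparatingBounded ends r p q a) {e₀ : E}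
    (he₀ : ends e₀ = s(p, q)) (hq : a q = 0) {S : Finset V} (hqS : q ∈ S) (hpS : p ∉ S) :
    ∑ v ∈ S, a v < multigraphKappa ends S + r := by
  have hsum : ∑ v ∈ S, a v = ∑ v ∈ S.erase q, a v := by
    rw [← add_sum_erase S a hqS, hq, zero_add]
  have hle := h.sum_le (S := S.erase q)
    (iff_of_false (fun hp => hpS (mem_of_mem_erase hp)) (notMem_erase q S))
  have hlt := multigraphKappa_lt_of_subset ends (erase_subset q S) hqS (e := e₀) (by simp [he₀])
    fun u hu hue => by
      rw [he₀, Sym2.mem_iff] at hue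
      rcases hue with rfl | rfl
      exacts [hpS (mem_of_mem_erase hu), notMem_erase u S hu]
  omega

theorem sum_add_sum_add_two_le (h : NonseparatingBounded ends r p q a) {e₀ : E}
    (he₀ : ends e₀ = s(p, q)) {S T : Finset V} (hpS : p ∈ S) (hqS : q ∉ S) (hqT : q ∈ T)
    (hpT : p ∉ T) :
    ∑ v ∈ S, a v + ∑ v ∈ T, a v + 2 ≤
      multigraphKappa ends S + multigraphKappa ends T + 2 * r := by
  have hunion := h (S ∪ T) ⟨p, mem_union_left T hpS⟩ (by simp [hpS, hqT])
  have hinter := h.sum_le (S := S ∩ T) (by simp [hpT, hqS])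
  have hκ := multigraphKappa_union_add_inter_lt ends he₀ hpS hpT hqT hqS
  have := sum_union_inter (s₁ := S) (s₂ := T) (f := a)
  omega

end NonseparatingBounded

end Nonseparating

section Contraction

variable {V E : Type*} [DecidableEq V] {p q : V}

def contractVertex (hpq : p ≠ q) : V → {v : V // v ≠ q} :=
  fun v => if h : v = q then ⟨p, hpq⟩ else ⟨v, h⟩

theorem contractVertex_surjective (hpq : p ≠ q) : Function.Surjective (contractVertex hpq) :=
  fun w => ⟨w.1, dif_neg w.2⟩

variable [Fintype V] [Fintype E]

theorem pushforward_contractVertex_apply (hpq : p ≠ q) (a : V → ℕ) (w : {v : V // v ≠ q}) :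
    pushforward (contractVertex hpq) a w = if w.1 = p then a p + a q else a w.1 := by
  have hfiber : univ.filter (fun v => contractVertex hpq v = w) =
      if w.1 = p then {p, q} else {w.1} := by
    obtain ⟨w, hw⟩ := w
    dsimp only
    ext v
    by_cases hvq : v = q
    · subst hvq
      split_ifs with hwp
      · simp [contractVertex, hwp]
      · simp [contractVertex, Subtype.ext_iff, hw.symm, Ne.symm hwp]
    · have hv : contractVertex hpq v = ⟨v, hvq⟩ := dif_neg hvq
      split_ifs with hwp <;> simp [hv, hvq, hwp, eq_comm]
  rw [pushforward, hfiber]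
  split_ifs
  · exact sum_pair hpq
  · exact sum_singleton a w.1

theorem pushforward_contractVertex_eq_iff (hpq : p ≠ q) {x y : V → ℕ} :
    pushforward (contractVertex hpq) x = pushforward (contractVertex hpq) y ↔
      x p + x q = y p + y q ∧ ∀ v, v ≠ p → v ≠ q → x v = y v := by
  simp only [funext_iff, pushforward_contractVertex_apply, Subtype.forall]
  constructor
  · intro h
    exact ⟨by simpa using h p hpq, fun v hvp hvq => by simpa [hvp] using h v hvq⟩
  · rintro ⟨hsum, hoff⟩ v hvq
    split_ifs with hvp
    exacts [hsum, hoff v hvp hvq]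

theorem filter_contractVertex_mem_image (hpq : p ≠ q) {S : Finset V} (hS : p ∈ S ↔ q ∈ S) :
    univ.filter (fun v => contractVertex hpq v ∈ S.image (contractVertex hpq)) = S := by
  ext v
  simp only [mem_filter, mem_univ, true_and, mem_image]
  refine ⟨fun ⟨u, hu, huv⟩ => ?_, fun hv => ⟨v, hv, rfl⟩⟩
  by_cases hvq : v = q <;> by_cases huq : u = q <;>
    simp [contractVertex, hvq, huq, Subtype.ext_iff] at huv <;> subst_vars <;> tauto

theorem nonseparatingBounded_of_pushforward_mem (hpq : p ≠ q) {ends : E → Sym2 V} {r k : ℕ}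
    {a : V → ℕ} (h : pushforward (contractVertex hpq) a ∈
      admissibleSet (fun e => Sym2.map (contractVertex hpq) (ends e)) r k) :
    NonseparatingBounded ends r p q a := by
  intro S hS hpqS
  have := ((pushforward_mem_admissibleSet_iff ends _ r k a).1 h).2
    (S.image (contractVertex hpq)) (hS.image _)
  rwa [filter_contractVertex_mem_image hpq hpqS] at this

end Contraction

section Shiftable

variable {V E : Type*} [Fintype V] [Fintype E] [DecidableEq V]

/-- The admissible `a` from which one unit can be moved from `p` to `q` without leaving
`admissibleSet ends r k`. -/
def shiftableSet (ends : E → Sym2 V) (r : ℕ) (p q : V) (k : ℕ) : Set (V → ℕ) :=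
  {a | a ∈ admissibleSet ends r k ∧ 1 ≤ a p ∧
    ∀ S : Finset V, q ∈ S → p ∉ S → ∑ v ∈ S, a v + 1 < multigraphKappa ends S + r}

theorem shiftableSet_zero (ends : E → Sym2 V) (r : ℕ) (p q : V) :
    shiftableSet ends r p q 0 = ∅ :=
  Set.eq_empty_of_forall_notMem fun a ⟨⟨hsum, _⟩, hp, _⟩ => by
    have := single_le_sum (f := a) (fun _ _ => Nat.zero_le _) (mem_univ p)
    omega

variable {ends : E → Sym2 V} {r k : ℕ} {p q : V}

theorem apply_le_of_pushforward_contractVertex_eq (hpq : p ≠ q) {x y : V → ℕ}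
    (hx : x ∈ admissibleSet ends r k) (hy : y ∈ admissibleSet ends r k)
    (hy' : y ∉ shiftableSet ends r p q k)
    (hxy : pushforward (contractVertex hpq) x = pushforward (contractVertex hpq) y) :
    y p ≤ x p := by
  obtain ⟨hsum, hoff⟩ := (pushforward_contractVertex_eq_iff hpq).1 hxy
  by_contra! hlt
  obtain ⟨S, hqS, hpS, hS⟩ : ∃ S : Finset V, q ∈ S ∧ p ∉ S ∧
      multigraphKappa ends S + r ≤ ∑ v ∈ S, y v + 1 := by
    by_contra! hslack
    exact hy' ⟨hy, by omega, hslack⟩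
  have hoffS : ∑ v ∈ S.erase q, x v = ∑ v ∈ S.erase q, y v :=
    sum_congr rfl fun v hv =>
      hoff v (fun h => hpS (h ▸ mem_of_mem_erase hv)) (ne_of_mem_erase hv)
  have := add_sum_erase S x hqS
  have := add_sum_erase S y hqS
  have := hx.2 S ⟨q, hqS⟩
  omega

theorem injOn_pushforward_contractVertex (hpq : p ≠ q) :
    Set.InjOn (pushforward (contractVertex hpq))
      (admissibleSet ends r k \ shiftableSet ends r p q k) := by
  rintro x ⟨hx, hx'⟩ y ⟨hy, hy'⟩ hxy
  have hp := le_antisymm (apply_le_of_pushforward_contractVertex_eq hpq hy hx hx' hxy.symm)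
    (apply_le_of_pushforward_contractVertex_eq hpq hx hy hy' hxy)
  obtain ⟨hsum, hoff⟩ := (pushforward_contractVertex_eq_iff hpq).1 hxy
  funext v
  by_cases hvp : v = p
  · exact hvp ▸ hp
  by_cases hvq : v = q
  · subst hvq
    omega
  exact hoff v hvp hvq

theorem mem_admissibleSet_of_not_shiftable (hpq : p ≠ q) {e₀ : E} (he₀ : ends e₀ = s(p, q))
    {a : V → ℕ} (hb : pushforward (contractVertex hpq) a ∈
      admissibleSet (fun e => Sym2.map (contractVertex hpq) (ends e)) r k)
    (hq : ∀ S : Finset V, q ∈ S → p ∉ S → ∑ v ∈ S, a v < multigraphKappa ends S + r)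
    (hstuck : 1 ≤ a p → ∃ T : Finset V, q ∈ T ∧ p ∉ T ∧
      multigraphKappa ends T + r ≤ ∑ v ∈ T, a v + 1) :
    a ∈ admissibleSet ends r k := by
  have hbd := nonseparatingBounded_of_pushforward_mem hpq hb
  refine ⟨((pushforward_mem_admissibleSet_iff ends _ r k a).1 hb).1, fun S hS => ?_⟩
  by_cases hpS : p ∈ S <;> by_cases hqS : q ∈ S
  · exact hbd S hS (iff_of_true hpS hqS)
  · rcases Nat.eq_zero_or_pos (a p) with hp0 | hp
    · exact hbd.symm.sum_lt_of_apply_eq_zero (he₀.trans Sym2.eq_swap) hp0 hpS hqS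
    · obtain ⟨T, hqT, hpT, hT⟩ := hstuck hp
      have := hbd.sum_add_sum_add_two_le he₀ hpS hqS hqT hpT
      omega
  · exact hq S hqS hpS
  · exact hbd S hS (iff_of_false hpS hqS)

theorem pushforward_contractVertex_dite (hpq : p ≠ q) (b : {v : V // v ≠ q} → ℕ) :
    pushforward (contractVertex hpq) (fun v => if h : v = q then 0 else b ⟨v, h⟩) = b := by
  funext ⟨w, hw⟩
  rw [pushforward_contractVertex_apply]
  by_cases hwp : w = p
  · subst hwp
    simp [hpq]
  · simp [hwp, hw]

theorem exists_shift_of_slack (hpq : p ≠ q) {a : V → ℕ} (hp : 1 ≤ a p)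
    (hslack : ∀ S : Finset V, q ∈ S → p ∉ S →
      ∑ v ∈ S, a v + 1 < multigraphKappa ends S + r) :
    ∃ a' : V → ℕ, pushforward (contractVertex hpq) a' = pushforward (contractVertex hpq) a ∧
      a' p < a p ∧
      ∀ S : Finset V, q ∈ S → p ∉ S → ∑ v ∈ S, a' v < multigraphKappa ends S + r := by
  obtain ⟨a', ha'⟩ := exists_add_pi_single_eq (a := a + Pi.single q 1) (p := p) (by simpa [hpq])
  have hp' : a' p + 1 = a p := by simpa [hpq] using congrFun ha' p
  have hq' : a' q = a q + 1 := by simpa [hpq.symm] using congrFun ha' q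
  refine ⟨a', (pushforward_contractVertex_eq_iff hpq).2 ⟨by omega, fun v hvp hvq => ?_⟩,
    by omega, fun S hqS hpS => ?_⟩
  · simpa [hvp, hvq] using congrFun ha' v
  · have hS := congrArg (fun f => ∑ v ∈ S, f v) ha'
    simp only [sum_add_pi_single, hqS, hpS, if_true, if_false, add_zero] at hS
    have := hslack S hqS hpS
    omega

theorem exists_pushforward_contractVertex_eq (hpq : p ≠ q) {e₀ : E}
    (he₀ : ends e₀ = s(p, q)) {b : {v : V // v ≠ q} → ℕ}
    (hb : b ∈ admissibleSet (fun e => Sym2.map (contractVertex hpq) (ends e)) r k) :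
    ∃ a ∈ admissibleSet ends r k \ shiftableSet ends r p q k,
      pushforward (contractVertex hpq) a = b := by
  set fiber := {a : V → ℕ | pushforward (contractVertex hpq) a = b ∧
    ∀ S : Finset V, q ∈ S → p ∉ S → ∑ v ∈ S, a v < multigraphKappa ends S + r}
  have hlift : (fun v => if h : v = q then 0 else b ⟨v, h⟩) ∈ fiber := by
    have hpush := pushforward_contractVertex_dite hpq b
    refine ⟨hpush, fun S hqS hpS => ?_⟩
    exact (nonseparatingBounded_of_pushforward_mem hpq (hpush ▸ hb)).sum_lt_of_apply_eq_zero he₀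
      (dif_pos rfl) hqS hpS
  obtain ⟨a, ⟨hab, hq⟩, hmin⟩ :=
    (measure fun a : V → ℕ => a p).wf.has_min fiber ⟨_, hlift⟩
  have hstuck : 1 ≤ a p → ∃ T : Finset V, q ∈ T ∧ p ∉ T ∧
      multigraphKappa ends T + r ≤ ∑ v ∈ T, a v + 1 := by
    intro hp
    by_contra! hslack
    obtain ⟨a', ha'b, ha'p, ha'q⟩ := exists_shift_of_slack hpq hp hslack
    exact hmin a' ⟨ha'b.trans hab, ha'q⟩ ha'p
  have ha := mem_admissibleSet_of_not_shiftable hpq he₀ (hab ▸ hb) hq hstuck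
  refine ⟨a, ⟨ha, fun hD => ?_⟩, hab⟩
  obtain ⟨T, hqT, hpT, hT⟩ := hstuck hD.2.1
  have := hD.2.2 T hqT hpT
  omega

end Shiftable

section Counting

variable {V E : Type*} [Fintype V] [Fintype E] [DecidableEq V] {ends : E → Sym2 V} {r : ℕ}
  {p q : V}

theorem Ncount_eq_Ncount_contract_add (hpq : p ≠ q) {e₀ : E} (he₀ : ends e₀ = s(p, q))
    (k : ℕ) :
    Ncount ends r k = Ncount (fun e => Sym2.map (contractVertex hpq) (ends e)) r k +
      (shiftableSet ends r p q k).ncard := by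
  have hbij : Set.BijOn (pushforward (contractVertex hpq))
      (admissibleSet ends r k \ shiftableSet ends r p q k)
      (admissibleSet (fun e => Sym2.map (contractVertex hpq) (ends e)) r k) :=
    ⟨fun _ ha => pushforward_mem_admissibleSet (contractVertex_surjective hpq) ha.1,
      injOn_pushforward_contractVertex hpq,
      fun _ hb => exists_pushforward_contractVertex_eq hpq he₀ hb⟩
  rw [Ncount_eq_ncard_admissibleSet, Ncount_eq_ncard_admissibleSet, ← hbij.ncard_eq,
    Set.ncard_sdiff_add_ncard_of_subset (fun _ h => h.1) (admissibleSet_finite ends r k)]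

theorem add_pi_single_mem_shiftableSet_iff [DecidableEq E] {e₀ : E}
    (he₀ : ends e₀ = s(p, q)) (k : ℕ) (c : V → ℕ) :
    c + Pi.single p 1 ∈ shiftableSet ends r p q (k + 1) ↔
      c ∈ admissibleSet (fun e : {e // e ≠ e₀} => ends e) r k := by
  have hκ : ∀ S : Finset V, multigraphKappa ends S =
      multigraphKappa (fun e : {e // e ≠ e₀} => ends e) S +
        if p ∈ S ∨ q ∈ S then 1 else 0 := by
    intro S
    rw [multigraphKappa_eq_subtype_ne_add ends e₀ S, he₀]
    simp [Sym2.mem_iff, and_or_left, exists_or]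
  have hp : (c + Pi.single p 1 : V → ℕ) p = c p + 1 := by simp
  simp only [shiftableSet, admissibleSet, Set.mem_ofPred_eq, sum_add_pi_single c p 1, hκ, hp,
    mem_univ, if_true, add_left_inj, le_add_iff_nonneg_left, zero_le, true_and]
  constructor
  · rintro ⟨⟨hsum, hS⟩, hqS⟩
    refine ⟨hsum, fun S hne => ?_⟩
    have := hS S hne
    by_cases hpS : p ∈ S
    · simp only [hpS, if_true, true_or] at this
      omega
    by_cases hqS' : q ∈ S
    · have := hqS S hqS' hpS
      simp only [hpS, hqS', if_false, if_true, or_true] at this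
      omega
    · simp only [hpS, hqS', if_false, or_self] at this
      omega
  · rintro ⟨hsum, hS⟩
    refine ⟨⟨hsum, fun S hne => ?_⟩, fun S hqS hpS => ?_⟩
    · have := hS S hne
      by_cases hpS : p ∈ S
      · simp only [hpS, if_true, true_or]
        omega
      · split_ifs <;> omega
    · have := hS S ⟨q, hqS⟩
      simp only [hpS, hqS, if_false, if_true, or_true]
      omega

theorem ncard_shiftableSet_succ [DecidableEq E] {e₀ : E} (he₀ : ends e₀ = s(p, q)) (k : ℕ) :
    (shiftableSet ends r p q (k + 1)).ncard = Ncount (fun e : {e // e ≠ e₀} => ends e) r k := by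
  have himage : shiftableSet ends r p q (k + 1) =
      (· + Pi.single p 1) '' admissibleSet (fun e : {e // e ≠ e₀} => ends e) r k := by
    ext a
    constructor
    · intro ha
      obtain ⟨c, rfl⟩ := exists_add_pi_single_eq ha.2.1
      exact ⟨c, (add_pi_single_mem_shiftableSet_iff he₀ k c).1 ha, rfl⟩
    · rintro ⟨c, hc, rfl⟩
      exact (add_pi_single_mem_shiftableSet_iff he₀ k c).2 hc
  rw [himage, Set.ncard_image_of_injective _ (add_left_injective _)]
  rfl

end Counting

/-- The loopy deletion–contraction relation for the Hilbert function of the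
`r`-bizonotopal algebra: `N_G(k+1) = N_{G/e₀}(k+1) + N_{G−e₀}(k)` (and the degree
zero components agree), where `G − e₀` deletes the non-loop edge `e₀` and `G/e₀`
identifies its endpoints `p ≠ q` without deleting any edge. -/
theorem loopy_deletion_contraction
    {V E : Type*} [Fintype V] [Fintype E] [DecidableEq V] [DecidableEq E]
    (ends : E → Sym2 V) (r : ℕ)
    (e₀ : E) (p q : V) (hpq : p ≠ q) (he₀ : ends e₀ = s(p, q)) :
    let φ : V → {v : V // v ≠ q} := fun v => if h : v = q then ⟨p, hpq⟩ else ⟨v, h⟩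
    let endsDel : {e : E // e ≠ e₀} → Sym2 V := fun e => ends e.1
    let endsCon : E → Sym2 {v : V // v ≠ q} := fun e => Sym2.map φ (ends e)
    Ncount ends r 0 = Ncount endsCon r 0 ∧
      ∀ k : ℕ, Ncount ends r (k + 1) = Ncount endsCon r (k + 1) + Ncount endsDel r k := by
  intro φ endsDel endsCon
  have hsplit : ∀ k, Ncount ends r k = Ncount endsCon r k + (shiftableSet ends r p q k).ncard :=
    Ncount_eq_Ncount_contract_add hpq he₀
  refine ⟨by simpa [shiftableSet_zero] using hsplit 0, fun k => ?_⟩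
  rw [hsplit, ncard_shiftableSet_succ he₀]
end

section
/- Let G be a simple graph on a finite vertex type V with n = |V| vertices in which every vertex has degree 4, and suppose G is 4-edge-connected: for every set F of at most 3 edges of G, the graph obtained from G by deleting the edges in F is connected. For S ⊆ V let κ_S denote the number of edges of G having at least one endpoint in S. Then for every a : V → ℕ, the condition (∑_{v∈S} a_v + 2 ≤ κ_S for every nonempty subset S ⊆ V) holds if and only if (a_v ≤ 2 for every v ∈ V and ∑_{v∈V} a_v ≤ 2n − 2). (Equivalently, the Hilbert series of the internal bizonotopal algebra B_G^i equals (1+t+t²)^n − n·t^{2n−1} − t^{2n}.) -/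
open Finset

/-- The degree `κ_S` of a subset `S` of vertices of a simple graph: the number of
edges of `G` having at least one endpoint in `S`. -/
def simpleGraphKappa {V : Type*} [Fintype V] [DecidableEq V]
    (G : SimpleGraph V) [DecidableRel G.Adj] (S : Finset V) : ℕ :=
  (G.edgeFinset.filter fun p => ∃ v ∈ S, v ∈ p).card

section Aux

variable {V : Type*} [Fintype V] [DecidableEq V] (G : SimpleGraph V) [DecidableRel G.Adj]

/-- Double counting: sum of degrees over `S` equals the sum over edges of the number
of endpoints in `S`. -/
lemma kappa_double_count (S : Finset V) :
    ∑ v ∈ S, G.degree v = ∑ e ∈ G.edgeFinset, (S.filter (· ∈ e)).card := by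
  have h : ∀ v ∈ S, G.degree v = ∑ e ∈ G.edgeFinset, (if v ∈ e then 1 else 0) := by
    intro v _
    rw [← SimpleGraph.card_incidenceFinset_eq_degree, SimpleGraph.incidenceFinset_eq_filter,
      Finset.card_filter]
  rw [Finset.sum_congr rfl h, Finset.sum_comm]
  exact Finset.sum_congr rfl fun e _ => (Finset.card_filter _ _).symm

lemma endpoints_le_two (S : Finset V) (e : Sym2 V) :
    (S.filter (· ∈ e)).card ≤ 2 := by
  induction e with
  | _ x y =>
    calc (S.filter (· ∈ s(x, y))).card ≤ ({x, y} : Finset V).card := by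
          apply Finset.card_le_card
          intro v hv
          simp only [Finset.mem_filter, Sym2.mem_iff] at hv
          simp [hv.2]
      _ ≤ 2 := (Finset.card_insert_le _ _).trans (by simp)

/-- The key inequality: `2 κ_S ≥ ∑_{v ∈ S} deg v + |cut(S)|`. -/
lemma two_kappa_ge (S : Finset V) :
    ∑ v ∈ S, G.degree v
        + (G.edgeFinset.filter fun p => (S.filter (· ∈ p)).card = 1).card
      ≤ 2 * simpleGraphKappa G S := by
  classical
  have hmem : ∀ e : Sym2 V, (∃ v ∈ S, v ∈ e) ↔ 1 ≤ (S.filter (· ∈ e)).card := by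
    intro e
    rw [Finset.one_le_card, Finset.filter_nonempty_iff]
  have h1 : ∑ e ∈ G.edgeFinset, (S.filter (· ∈ e)).card
      = ∑ e ∈ G.edgeFinset.filter (fun p => ∃ v ∈ S, v ∈ p), (S.filter (· ∈ e)).card := by
    refine (Finset.sum_filter_of_ne ?_).symm
    intro e _ hne
    exact (hmem e).mpr (by omega)
  have h2 : (G.edgeFinset.filter fun p => (S.filter (· ∈ p)).card = 1)
      = (G.edgeFinset.filter (fun p => ∃ v ∈ S, v ∈ p)).filter
          (fun p => (S.filter (· ∈ p)).card = 1) := by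
    rw [Finset.filter_filter]
    apply Finset.filter_congr
    intro e _
    constructor
    · intro h; exact ⟨(hmem e).mpr (by omega), h⟩
    · exact fun h => h.2
  calc ∑ v ∈ S, G.degree v
        + (G.edgeFinset.filter fun p => (S.filter (· ∈ p)).card = 1).card
      = ∑ e ∈ G.edgeFinset.filter (fun p => ∃ v ∈ S, v ∈ p),
          ((S.filter (· ∈ e)).card + if (S.filter (· ∈ e)).card = 1 then 1 else 0) := by
        rw [kappa_double_count, h1, h2, Finset.card_filter, ← Finset.sum_add_distrib]
    _ ≤ ∑ _e ∈ G.edgeFinset.filter (fun p => ∃ v ∈ S, v ∈ p), 2 := by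
        refine Finset.sum_le_sum fun e he => ?_
        rw [Finset.mem_filter] at he
        have hle2 := endpoints_le_two S e
        have hge1 := (hmem e).mp he.2
        split_ifs <;> omega
    _ = 2 * simpleGraphKappa G S := by
        rw [Finset.sum_const, smul_eq_mul, mul_comm, simpleGraphKappa]

end Aux

section Cut

variable {V : Type*} [Fintype V] [DecidableEq V] (G : SimpleGraph V) [DecidableRel G.Adj]

lemma cut_ge_four
    (hconn : ∀ F : Set (Sym2 V), F ⊆ G.edgeSet → F.ncard ≤ 3 →
      (G.deleteEdges F).Connected)
    (S : Finset V) (hne : S.Nonempty) (hproper : ∃ w, w ∉ S) :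
    4 ≤ (G.edgeFinset.filter fun p => (S.filter (· ∈ p)).card = 1).card := by
  classical
  by_contra hlt
  push_neg at hlt
  set F : Finset (Sym2 V) := G.edgeFinset.filter fun p => (S.filter (· ∈ p)).card = 1 with hF
  have hsub : (↑F : Set (Sym2 V)) ⊆ G.edgeSet := by
    intro e he
    simp only [hF, Finset.coe_filter, Set.mem_setOf_eq, SimpleGraph.mem_edgeFinset] at he
    exact he.1
  have hcard : (↑F : Set (Sym2 V)).ncard ≤ 3 := by
    rw [Set.ncard_coe_finset]; omega
  obtain ⟨u, hu⟩ := hne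
  obtain ⟨w, hw⟩ := hproper
  obtain ⟨p⟩ := (hconn ↑F hsub hcard).preconnected u w
  obtain ⟨d, _, hdS, hdS'⟩ := p.exists_boundary_dart ↑S hu hw
  have hadj : (G.deleteEdges ↑F).Adj d.fst d.snd := d.adj
  rw [SimpleGraph.deleteEdges_adj] at hadj
  apply hadj.2
  simp only [hF, Finset.coe_filter, Set.mem_setOf_eq, SimpleGraph.mem_edgeFinset]
  refine ⟨(SimpleGraph.mem_edgeSet G).mpr hadj.1, ?_⟩
  have : S.filter (· ∈ s(d.fst, d.snd)) = {d.fst} := by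
    ext v
    simp only [Finset.mem_filter, Sym2.mem_iff, Finset.mem_singleton]
    constructor
    · rintro ⟨hvS, rfl | rfl⟩
      · rfl
      · exact absurd hvS hdS'
    · rintro rfl; exact ⟨hdS, Or.inl rfl⟩
  rw [this, Finset.card_singleton]

end Cut

/-- For a 4-regular, 4-edge-connected simple graph `G` with `n` vertices, a vector
`a : V → ℕ` satisfies `∑_{v∈S} a v ≤ κ_S − 2` for all nonempty `S ⊆ V` if and
only if `a v ≤ 2` for every vertex and `∑_v a v ≤ 2n − 2`; i.e. the Hilbert
series of the internal bizonotopal algebra `B_G^i` is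
`(1+t+t²)^n − n·t^{2n−1} − t^{2n}`. -/
theorem internal_hilbert_four_regular {V : Type*} [Fintype V] [DecidableEq V]
    (G : SimpleGraph V) [DecidableRel G.Adj]
    (hreg : ∀ v : V, G.degree v = 4)
    (hconn : ∀ F : Set (Sym2 V), F ⊆ G.edgeSet → F.ncard ≤ 3 →
      (G.deleteEdges F).Connected)
    (a : V → ℕ) :
    (∀ S : Finset V, S.Nonempty → ∑ v ∈ S, a v + 2 ≤ simpleGraphKappa G S) ↔
      ((∀ v : V, a v ≤ 2) ∧ ∑ v : V, a v ≤ 2 * Fintype.card V - 2) := by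
  have hE : 2 * G.edgeFinset.card = 4 * Fintype.card V := by
    rw [← SimpleGraph.sum_degrees_eq_twice_card_edges]
    simp [hreg, mul_comm]
  constructor
  · intro h
    constructor
    · intro v
      have h1 := h {v} ⟨v, Finset.mem_singleton_self v⟩
      rw [Finset.sum_singleton] at h1
      have h2 : simpleGraphKappa G {v} = G.degree v := by
        rw [simpleGraphKappa, ← SimpleGraph.card_incidenceFinset_eq_degree,
          SimpleGraph.incidenceFinset_eq_filter]
        congr 1
        apply Finset.filter_congr
        intro e _
        simp
      rw [h2, hreg v] at h1
      omega
    · rcases isEmpty_or_nonempty V with hV | hV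
      · simp
      · have h1 := h Finset.univ Finset.univ_nonempty
        have h2 : simpleGraphKappa G Finset.univ ≤ G.edgeFinset.card :=
          Finset.card_filter_le _ _
        omega
  · rintro ⟨hv, hsum⟩ S hSne
    have hkey := two_kappa_ge G S
    have hdeg : ∑ v ∈ S, G.degree v = 4 * S.card := by
      simp [hreg, mul_comm]
    rw [hdeg] at hkey
    have haS : ∑ v ∈ S, a v ≤ 2 * S.card := by
      calc ∑ v ∈ S, a v ≤ ∑ _v ∈ S, 2 := Finset.sum_le_sum fun v _ => hv v
        _ = 2 * S.card := by rw [Finset.sum_const, smul_eq_mul, mul_comm]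
    by_cases hU : S = Finset.univ
    · subst hU
      have hn : 1 ≤ Fintype.card V := Fintype.card_pos_iff.mpr ⟨hSne.choose⟩
      rw [Finset.card_univ] at hkey
      omega
    · have hproper : ∃ w, w ∉ S := by
        by_contra hc
        push_neg at hc
        exact hU (Finset.eq_univ_iff_forall.mpr hc)
      have hcut := cut_ge_four G hconn S hSne hproper
      omega
end
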